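/- Let p be a prime, R an F_p-algebra, and λ ∈ R. Let A = R[X,Y]/(X^p,Y^p) be the Hopf algebra of G^{(λ)}_R with Δ(Y) = Y⊗1 + (1+λX)⊗Y, and let S be the coordinate ring of U(G^{(λ)}_R) with the cleaving map φ: A → S sending X^{r₁}Y^{r₂} ↦ T_{X^{r₁}Y^{r₂}}. Then the convolution inverse φ^{−1} of φ satisfies φ^{−1}(Y) = −T_Y / (T_1 · (T_1 + λT_X)). That is, with φ^{−1}(1) = T_1^{−1}, the convolution identity on Y reads T_Y·φ^{−1}(1) + (T_1+λT_X)·φ^{−1}(Y) = 0, which forces this value. -/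

import Mathlib

open scoped TensorProduct

noncomputable section

/-- The Hopf algebra `A = R[X,Y]/(X^p, Y^p)` of `G^{(λ)}_R`. -/
abbrev Aq (p : ℕ) (R : Type*) [CommRing R] : Type _ :=
  MvPolynomial (Fin 2) R ⧸
    Ideal.span ({MvPolynomial.X 0 ^ p, MvPolynomial.X 1 ^ p} :
      Set (MvPolynomial (Fin 2) R))

/-- The class of `X` in `A`. -/
def aX (p : ℕ) (R : Type*) [CommRing R] : Aq p R :=
  Ideal.Quotient.mk _ (MvPolynomial.X 0)

/-- The class of `Y` in `A`. -/
def aY (p : ℕ) (R : Type*) [CommRing R] : Aq p R :=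
  Ideal.Quotient.mk _ (MvPolynomial.X 1)

/-- The basis monomial `X^{r₁}Y^{r₂}` of `A`, indexed by `(r₁, r₂)`. -/
def eMon (p : ℕ) (R : Type*) [CommRing R] (r : Fin p × Fin p) : Aq p R :=
  aX p R ^ (r.1 : ℕ) * aY p R ^ (r.2 : ℕ)

/-- The index of `T_{X^k Y^l}` among the variables `T_{X^{r₁}Y^{r₂}}`. -/
def idx (p : ℕ) (hp : p.Prime) (k l : ℕ) : Fin p × Fin p :=
  (⟨k % p, Nat.mod_lt _ hp.pos⟩, ⟨l % p, Nat.mod_lt _ hp.pos⟩)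

/-- The determinant `D = Π_{r=0}^{p-1} (Σ_{k=0}^{r} C(r,k) λ^k T_{X^k})^p` of the
right regular representation, as a polynomial in the variables `T_{X^{r₁}Y^{r₂}}`. -/
def Dpoly (p : ℕ) (hp : p.Prime) (R : Type*) [CommRing R] (lam : R) :
    MvPolynomial (Fin p × Fin p) R :=
  ∏ r ∈ Finset.range p,
    (∑ k ∈ Finset.range (r + 1),
      MvPolynomial.C (((r.choose k : ℕ) : R) * lam ^ k) *
        MvPolynomial.X (idx p hp k 0)) ^ p

/-- The coordinate ring `S = R[T_{X^{r₁}Y^{r₂}}, 1/D]` of `U(G^{(λ)}_R)`. -/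
abbrev SA (p : ℕ) (hp : p.Prime) (R : Type*) [CommRing R] (lam : R) : Type _ :=
  Localization.Away (Dpoly p hp R lam)

/-- The generator `T_{X^{r₁}Y^{r₂}}` of `S`. -/
def Tg (p : ℕ) (hp : p.Prime) (R : Type*) [CommRing R] (lam : R)
    (j : Fin p × Fin p) : SA p hp R lam :=
  algebraMap (MvPolynomial (Fin p × Fin p) R) (SA p hp R lam) (MvPolynomial.X j)

section Convolution

variable {R A S : Type*} [CommRing R] [Ring A] [Algebra R A] [CommRing S] [Algebra R S]
  {Δ : A →ₐ[R] A ⊗[R] A} {ε : A →ₐ[R] R} {φ ψ : A →ₗ[R] S}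

theorem mul_apply_one_of_convolution_eq
    (h : (LinearMap.mul' R S).comp ((TensorProduct.map φ ψ).comp Δ.toLinearMap)
      = (Algebra.linearMap R S).comp ε.toLinearMap) :
    φ 1 * ψ 1 = 1 := by
  simpa [Algebra.TensorProduct.one_def] using LinearMap.congr_fun h 1

theorem convolution_eq_zero_of_comul_eq {y g : A}
    (h : (LinearMap.mul' R S).comp ((TensorProduct.map φ ψ).comp Δ.toLinearMap)
      = (Algebra.linearMap R S).comp ε.toLinearMap)
    (hΔ : Δ y = y ⊗ₜ 1 + g ⊗ₜ y) (hε : ε y = 0) :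
    φ y * ψ 1 + φ g * ψ y = 0 := by
  simpa [hΔ, hε] using LinearMap.congr_fun h y

end Convolution

section Monomials

variable (p : ℕ) (hp : p.Prime) (R : Type*) [CommRing R]

theorem eMon_idx_zero_zero : eMon p R (idx p hp 0 0) = 1 := by
  simp [eMon, idx]

theorem eMon_idx_zero_one : eMon p R (idx p hp 0 1) = aY p R := by
  simp [eMon, idx, Nat.mod_eq_of_lt hp.one_lt]

theorem eMon_idx_one_zero : eMon p R (idx p hp 1 0) = aX p R := by
  simp [eMon, idx, Nat.mod_eq_of_lt hp.one_lt]

end Monomials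

theorem stmt16_general (p : ℕ) (hp : p.Prime) (R : Type*) [CommRing R] (lam : R)
    -- the comultiplication and counit of A, pinned on the generators
    (ΔA : Aq p R →ₐ[R] Aq p R ⊗[R] Aq p R)
    (hΔY : ΔA (aY p R) = aY p R ⊗ₜ 1 +
      (1 + algebraMap R (Aq p R) lam * aX p R) ⊗ₜ aY p R)
    (εA : Aq p R →ₐ[R] R) (hεY : εA (aY p R) = 0)
    -- the cleaving map φ and a convolution inverse ψ of it
    (φ ψ : Aq p R →ₗ[R] SA p hp R lam)
    (hφ : ∀ j, φ (eMon p R j) = Tg p hp R lam j)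
    (hconv : (LinearMap.mul' R (SA p hp R lam)).comp
        ((TensorProduct.map φ ψ).comp ΔA.toLinearMap)
      = (Algebra.linearMap R (SA p hp R lam)).comp εA.toLinearMap) :
    -- `φ⁻¹(1) = T_1⁻¹`
    Tg p hp R lam (idx p hp 0 0) * ψ 1 = 1 ∧
    -- `(T_1·(T_1+λT_X))·φ⁻¹(Y) = -T_Y`
    (Tg p hp R lam (idx p hp 0 0) *
        (Tg p hp R lam (idx p hp 0 0) +
          algebraMap R (SA p hp R lam) lam * Tg p hp R lam (idx p hp 1 0))) *
      ψ (aY p R) = - Tg p hp R lam (idx p hp 0 1) := by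
  have hφ1 : φ 1 = Tg p hp R lam (idx p hp 0 0) := by rw [← hφ, eMon_idx_zero_zero]
  have hφY : φ (aY p R) = Tg p hp R lam (idx p hp 0 1) := by rw [← hφ, eMon_idx_zero_one]
  have hφX : φ (aX p R) = Tg p hp R lam (idx p hp 1 0) := by rw [← hφ, eMon_idx_one_zero]
  have hφg : φ (1 + algebraMap R (Aq p R) lam * aX p R)
      = Tg p hp R lam (idx p hp 0 0) + algebraMap R _ lam * Tg p hp R lam (idx p hp 1 0) := by
    rw [map_add, ← Algebra.smul_def, map_smul, hφ1, hφX, Algebra.smul_def]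
  have hunit := mul_apply_one_of_convolution_eq hconv
  have hY := convolution_eq_zero_of_comul_eq hconv hΔY hεY
  rw [hφ1] at hunit
  rw [hφY, hφg] at hY
  refine ⟨hunit, ?_⟩
  linear_combination Tg p hp R lam (idx p hp 0 0) * hY - Tg p hp R lam (idx p hp 0 1) * hunit

/-- the convolution inverse `φ⁻¹` of the cleaving map
`φ : A → S`, `X^{r₁}Y^{r₂} ↦ T_{X^{r₁}Y^{r₂}}` satisfies `φ⁻¹(1) = T_1⁻¹` and
`φ⁻¹(Y) = -T_Y/(T_1·(T_1+λT_X))`. -/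
theorem stmt16 (p : ℕ) (hp : p.Prime) (R : Type*) [CommRing R] [CharP R p] (lam : R)
    -- the comultiplication and counit of A, pinned on the generators
    (ΔA : Aq p R →ₐ[R] Aq p R ⊗[R] Aq p R)
    (hΔX : ΔA (aX p R) = aX p R ⊗ₜ 1 +
      (1 + algebraMap R (Aq p R) lam * aX p R) ⊗ₜ aX p R)
    (hΔY : ΔA (aY p R) = aY p R ⊗ₜ 1 +
      (1 + algebraMap R (Aq p R) lam * aX p R) ⊗ₜ aY p R)
    (εA : Aq p R →ₐ[R] R) (hεX : εA (aX p R) = 0) (hεY : εA (aY p R) = 0)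
    -- the cleaving map φ and a convolution inverse ψ of it
    (φ ψ : Aq p R →ₗ[R] SA p hp R lam)
    (hφ : ∀ j, φ (eMon p R j) = Tg p hp R lam j)
    (hconv : (LinearMap.mul' R (SA p hp R lam)).comp
        ((TensorProduct.map φ ψ).comp ΔA.toLinearMap)
      = (Algebra.linearMap R (SA p hp R lam)).comp εA.toLinearMap) :
    -- `φ⁻¹(1) = T_1⁻¹`
    Tg p hp R lam (idx p hp 0 0) * ψ 1 = 1 ∧
    -- `(T_1·(T_1+λT_X))·φ⁻¹(Y) = -T_Y`
    (Tg p hp R lam (idx p hp 0 0) *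
        (Tg p hp R lam (idx p hp 0 0) +
          algebraMap R (SA p hp R lam) lam * Tg p hp R lam (idx p hp 1 0))) *
      ψ (aY p R) = - Tg p hp R lam (idx p hp 0 1) :=
  stmt16_general p hp R lam ΔA hΔY εA hεY φ ψ hφ hconv
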